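/- Let X and Y be pointed topological spaces with maps f : X → Y and g : Y → X such that g ∘ f is the identity on X. Then the homotopy fiber of f is weakly homotopy equivalent to the loop space of the homotopy fiber of g. -/

import Mathlib

noncomputable section
open unitInterval CategoryTheory

/-- The homotopy fiber of `f : X → Y` over `y : Y`. -/
def HFiber {X Y : Type} [TopologicalSpace X] [TopologicalSpace Y] (f : C(X, Y)) (y : Y) : Type :=
  { p : X × C(I, Y) // p.2 0 = f p.1 ∧ p.2 1 = y }

instance {X Y : Type} [TopologicalSpace X] [TopologicalSpace Y] (f : C(X, Y)) (y : Y) :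
    TopologicalSpace (HFiber f y) :=
  instTopologicalSpaceSubtype

/-- The based loop space of `Z` at `z`. -/
def LoopSp (Z : Type) [TopologicalSpace Z] (z : Z) : Type :=
  { γ : C(I, Z) // γ 0 = z ∧ γ 1 = z }

instance (Z : Type) [TopologicalSpace Z] (z : Z) : TopologicalSpace (LoopSp Z z) :=
  instTopologicalSpaceSubtype

/-- `X` is `n`-connected (`n : ℤ`): nonempty if `n ≥ -1`, and all homotopy groups in
degrees `≤ n` are trivial (at every basepoint). -/
def IsConnSpace (n : ℤ) (X : Type) [TopologicalSpace X] : Prop :=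
  (-1 ≤ n → Nonempty X) ∧
    ∀ (x : X) (i : ℕ), (i : ℤ) ≤ n → Subsingleton (HomotopyGroup (Fin i) X x)

/-- A map is `k`-connected if all of its homotopy fibers are `(k-1)`-connected. -/
def IsConnMap (k : ℤ) {X Y : Type} [TopologicalSpace X] [TopologicalSpace Y] (f : C(X, Y)) : Prop :=
  ∀ y : Y, IsConnSpace (k - 1) (HFiber f y)

/-- A weak homotopy equivalence is an `∞`-connected map. -/
def IsWeakEquiv {X Y : Type} [TopologicalSpace X] [TopologicalSpace Y] (f : C(X, Y)) : Prop :=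
  ∀ k : ℤ, IsConnMap k f

/-- Two spaces are weakly homotopy equivalent if there is a weak equivalence between
them in one direction or the other. -/
def WeakHomotopyEquivalent (X Y : Type) [TopologicalSpace X] [TopologicalSpace Y] : Prop :=
  (∃ f : C(X, Y), IsWeakEquiv f) ∨ (∃ g : C(Y, X), IsWeakEquiv g)

/-!
Write `F` and `G` for the homotopy fibres of `f` over `y₀` and of `g` over `x₀`. A path `η` in
`Y` ending at `y₀` lifts to the path `r ↦ (η r, g ∘ η|[r, 1])` in `G` ending at the base point.
For `(x, γ) ∈ F` the lifts of `f ∘ g ∘ γ` and of `γ` start at the same point `(f x, g ∘ γ)`,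
because `g ∘ f ∘ g = g`, so they form a loop in `G`; in the other direction a loop in `G` gives
`(x₀, ω)`, `ω` its `Y`-component. On `F` the round trip is undone by sliding `x` along `g ∘ γ`.
On `ΩG` the square carried by a loop `δ = (ω, D)` (a null-homotopy of `g ∘ ω`) can be turned so
that the round trip becomes `(κ ∘ δ)⁻¹ · δ` with `κ (y, β) = (f (g y), β)`, and `κ` is
null-homotopic relative to the base point by sliding along `β`. Finally, a homotopy equivalence
has contractible homotopy fibres, and contractible spaces have trivial homotopy groups.
-/

def projI (r : ℝ) : I := Set.projIcc 0 1 zero_le_one r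

@[fun_prop] lemma continuous_projI : Continuous projI := continuous_projIcc (h := zero_le_one)

lemma projI_of_nonpos {r : ℝ} (h : r ≤ 0) : projI r = 0 := by
  rw [projI, Set.projIcc_of_le_left _ h]; rfl

lemma projI_of_one_le {r : ℝ} (h : 1 ≤ r) : projI r = 1 := by
  rw [projI, Set.projIcc_of_right_le _ h]; rfl

@[simp] lemma projI_zero : projI 0 = 0 := projI_of_nonpos le_rfl

@[simp] lemma projI_one : projI 1 = 1 := projI_of_one_le le_rfl

@[simp] lemma projI_coe (t : I) : projI t = t := Set.projIcc_val _ t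

section Cube

variable {N Z : Type} [TopologicalSpace Z]

def bump (r : I) : I :=
  ⟨min 1 (4 * min (r : ℝ) (1 - r)),
    le_min zero_le_one (mul_nonneg (by norm_num) (le_min r.2.1 (sub_nonneg.2 r.2.2))),
    min_le_left _ _⟩

@[fun_prop] lemma continuous_bump : Continuous bump := by unfold bump; fun_prop

lemma bump_eq_one {r : I} (h₁ : 1 / 4 ≤ (r : ℝ)) (h₂ : (r : ℝ) ≤ 3 / 4) : bump r = 1 := by
  ext; simp only [bump, Set.Icc.coe_one, min_eq_left_iff]
  rcases min_cases (r : ℝ) (1 - r) with ⟨h, -⟩ | ⟨h, -⟩ <;> rw [h] <;> linarith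

def cubeBump [Fintype N] (y : N → I) : I := ∏ i, bump (y i)

@[fun_prop] lemma continuous_cubeBump [Fintype N] : Continuous (cubeBump (N := N)) := by
  unfold cubeBump; fun_prop

lemma cubeBump_of_mem_boundary [Fintype N] {y : N → I} (hy : y ∈ Cube.boundary N) :
    cubeBump y = 0 := by
  obtain ⟨i, hi | hi⟩ := hy <;>
    exact Finset.prod_eq_zero (Finset.mem_univ i) (by ext; simp [bump, hi])

def cubeStretch : C(I × (N → I), N → I) :=
  ⟨fun p i => projI (p.2 i + p.1 * (p.2 i - 1 / 2)), by fun_prop⟩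

lemma cubeStretch_zero (y : N → I) : cubeStretch (0, y) = y := by
  ext i; simp [cubeStretch]

lemma cubeStretch_mem_boundary (u : I) {y : N → I} (hy : y ∈ Cube.boundary N) :
    cubeStretch (u, y) ∈ Cube.boundary N := by
  obtain ⟨i, hi | hi⟩ := hy
  · exact ⟨i, Or.inl (projI_of_nonpos (by simp [hi]; nlinarith [u.2.1]))⟩
  · exact ⟨i, Or.inr (projI_of_one_le (by simp [hi]; nlinarith [u.2.1]))⟩

lemma cubeBump_eq_one [Fintype N] {y : N → I} (hy : cubeStretch (1, y) ∉ Cube.boundary N) :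
    cubeBump y = 1 := by
  refine Finset.prod_eq_one fun i _ => bump_eq_one ?_ ?_
  · by_contra h
    exact hy ⟨i, Or.inl (projI_of_nonpos (by simp; linarith))⟩
  · by_contra h
    exact hy ⟨i, Or.inr (projI_of_one_le (by simp; linarith))⟩

variable {x : Z}

lemma homotopicRel_comp_cubeStretch (p : C(N → I, Z)) (hp : ∀ y ∈ Cube.boundary N, p y = x) :
    p.HomotopicRel (p.comp (cubeStretch.curry 1)) (Cube.boundary N) :=
  ⟨{  toContinuousMap := p.comp cubeStretch
      map_zero_left := fun y => by simp [cubeStretch_zero]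
      map_one_left := fun y => rfl
      prop' := fun u y hy => (hp _ (cubeStretch_mem_boundary u hy)).trans (hp y hy).symm }⟩

lemma homotopicRel_comp_cubeBump [Fintype N] (H : C(I × Z, Z)) (hH : ∀ z, H (0, z) = z)
    (q : C(N → I, Z)) :
    q.HomotopicRel (H.comp ⟨fun y => (cubeBump y, q y), by fun_prop⟩) (Cube.boundary N) :=
  ⟨{  toFun p := H (p.1 * cubeBump p.2, q p.2)
      continuous_toFun := by fun_prop
      map_zero_left y := by simp [hH]
      map_one_left y := by simp
      prop' u y hy := by simp [cubeBump_of_mem_boundary hy, hH] }⟩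

/-- After stretching, `p` equals `x` wherever `cubeBump < 1`, so pushing it along a contraction
weighted by `cubeBump` gives a map that no longer depends on `p`. -/
theorem GenLoop.homotopic_const [Fintype N] [ContractibleSpace Z] (p : GenLoop N Z x) :
    GenLoop.Homotopic p GenLoop.const := by
  obtain ⟨z, ⟨H⟩⟩ := id_nullhomotopic Z
  have hH : ∀ z, H (0, z) = z := H.apply_zero
  have hp : p.1.HomotopicRel
      (H.toContinuousMap.comp ⟨fun y => (cubeBump y, x), by fun_prop⟩) (Cube.boundary N) := by
    convert (homotopicRel_comp_cubeStretch p.1 p.2).trans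
      (homotopicRel_comp_cubeBump H.toContinuousMap hH _) using 1
    ext y
    by_cases hy : cubeStretch (1, y) ∈ Cube.boundary N
    · simp [GenLoop.boundary p _ hy]
    · simp [cubeBump_eq_one hy]
  exact hp.trans (homotopicRel_comp_cubeBump H.toContinuousMap hH (ContinuousMap.const _ x)).symm

instance HomotopyGroup.subsingleton_of_contractibleSpace [Fintype N] [ContractibleSpace Z] :
    Subsingleton (HomotopyGroup N Z x) :=
  ⟨fun a b => Quotient.inductionOn₂ a b fun p q =>
    Quotient.sound ((GenLoop.homotopic_const p).trans (GenLoop.homotopic_const q).symm)⟩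

end Cube

lemma isConnSpace_of_contractibleSpace (n : ℤ) (Z : Type) [TopologicalSpace Z]
    [ContractibleSpace Z] : IsConnSpace n Z :=
  ⟨fun _ => inferInstance, fun _ _ _ => inferInstance⟩

section Concat

variable {Z : Type}

def concat (a b : ℝ → Z) (t : ℝ) : Z := if t ≤ 1 / 2 then a (2 * t) else b (2 * t - 1)

lemma concat_of_le_half {a b : ℝ → Z} {t : ℝ} (ht : t ≤ 1 / 2) : concat a b t = a (2 * t) :=
  if_pos ht

@[simp] lemma concat_zero (a b : ℝ → Z) : concat a b 0 = a 0 := by simp [concat]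

@[simp] lemma concat_one (a b : ℝ → Z) : concat a b 1 = b 1 := by norm_num [concat]

lemma concat_const_left {g : ℝ → Z} {c : Z} (hg : ∀ r ≤ 0, g r = c) (t : ℝ) :
    concat (fun _ => c) g t = g (2 * t - 1) := by
  unfold concat
  split_ifs with h
  · exact (hg _ (by linarith)).symm
  · rfl

lemma concat_const_right {g : ℝ → Z} {c : Z} (hg : ∀ r, 1 ≤ r → g r = c) (t : ℝ) :
    concat g (fun _ => c) t = g (2 * t) := by
  unfold concat
  split_ifs with h
  · rfl
  · exact (hg _ (by linarith)).symm

lemma comp_concat {Z' : Type} (k : Z → Z') (a b : ℝ → Z) (t : ℝ) :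
    k (concat a b t) = concat (fun r => k (a r)) (fun r => k (b r)) t := by
  unfold concat; split_ifs <;> rfl

lemma Continuous.concat {W : Type} [TopologicalSpace W] [TopologicalSpace Z] {a b : W → ℝ → Z}
    (ha : Continuous fun p : W × ℝ => a p.1 p.2) (hb : Continuous fun p : W × ℝ => b p.1 p.2)
    (hab : ∀ w, a w 1 = b w 0) {t : W → ℝ} (ht : Continuous t) :
    Continuous fun w => concat (a w) (b w) (t w) :=
  Continuous.if_le (by fun_prop) (by fun_prop) ht continuous_const
    fun w hw => by norm_num [hw, hab]

end Concat

namespace HFiber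

variable {X Y W : Type} [TopologicalSpace X] [TopologicalSpace Y] [TopologicalSpace W]
  {f : C(X, Y)} {y : Y}

@[ext] lemma ext {w w' : HFiber f y} (h₁ : w.1.1 = w'.1.1) (h₂ : ∀ t, w.1.2 t = w'.1.2 t) :
    w = w' :=
  Subtype.ext (Prod.ext h₁ (ContinuousMap.ext h₂))

def extend (w : HFiber f y) (r : ℝ) : Y := w.1.2 (projI r)

lemma extend_of_nonpos (w : HFiber f y) {r : ℝ} (h : r ≤ 0) : w.extend r = f w.1.1 := by
  rw [extend, projI_of_nonpos h, w.2.1]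

lemma extend_of_one_le (w : HFiber f y) {r : ℝ} (h : 1 ≤ r) : w.extend r = y := by
  rw [extend, projI_of_one_le h, w.2.2]

@[simp] lemma extend_coe (w : HFiber f y) (t : I) : w.extend t = w.1.2 t :=
  congrArg w.1.2 (projI_coe t)

@[simp] lemma extend_projI (w : HFiber f y) (r : ℝ) : w.extend (projI r) = w.extend r :=
  congrArg w.1.2 (projI_coe _)

@[fun_prop] lemma continuous_base {a : W → HFiber f y} (ha : Continuous a) :
    Continuous fun w => (a w).1.1 :=
  continuous_fst.comp (continuous_subtype_val.comp ha)

@[fun_prop] lemma continuous_extend {a : W → HFiber f y} {r : W → ℝ} (ha : Continuous a)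
    (hr : Continuous r) : Continuous fun w => (a w).extend (r w) := by
  have : Continuous fun w => (a w).1.2 := continuous_snd.comp (continuous_subtype_val.comp ha)
  unfold extend; fun_prop

def mk (a : X) (γ : ℝ → Y) (hγ : Continuous γ) (h₀ : γ 0 = f a) (h₁ : γ 1 = y) : HFiber f y :=
  ⟨(a, ⟨fun t => γ t, by fun_prop⟩), h₀, h₁⟩

def lift (a : W → X) (Γ : W → ℝ → Y) (ha : Continuous a)
    (hΓ : Continuous fun p : W × ℝ => Γ p.1 p.2) (h₀ : ∀ w, Γ w 0 = f (a w))
    (h₁ : ∀ w, Γ w 1 = y) : C(W, HFiber f y) where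
  toFun w := mk (a w) (Γ w) (by fun_prop) (h₀ w) (h₁ w)
  continuous_toFun := by
    refine Continuous.subtype_mk (ha.prodMk (ContinuousMap.continuous_of_continuous_uncurry _ ?_)) _
    exact hΓ.comp (continuous_fst.prodMk (continuous_subtype_val.comp continuous_snd))

section Lift

variable {a : W → X} {Γ : W → ℝ → Y} {ha : Continuous a}
  {hΓ : Continuous fun p : W × ℝ => Γ p.1 p.2} {h₀ : ∀ w, Γ w 0 = f (a w)} {h₁ : ∀ w, Γ w 1 = y}

@[simp] lemma lift_base (w : W) : (lift a Γ ha hΓ h₀ h₁ w).1.1 = a w := rfl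

@[simp] lemma lift_path (w : W) (t : I) : (lift a Γ ha hΓ h₀ h₁ w).1.2 t = Γ w t := rfl

@[simp] lemma extend_lift (w : W) (r : ℝ) :
    (lift a Γ ha hΓ h₀ h₁ w).extend r = Γ w (projI r) := rfl

end Lift

def reparam (ρ : ℝ → ℝ) (hρ : Continuous ρ) (h₀ : ρ 0 ≤ 0) (h₁ : 1 ≤ ρ 1) :
    C(HFiber f y, HFiber f y) :=
  lift (·.1.1) (fun w r => w.extend (ρ r)) (by fun_prop) (by fun_prop)
    (fun w => w.extend_of_nonpos h₀) (fun w => w.extend_of_one_le h₁)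

lemma homotopic_reparam (ρ : ℝ → ℝ) (hρ : Continuous ρ) (h₀ : ρ 0 ≤ 0) (h₁ : 1 ≤ ρ 1) :
    (ContinuousMap.id (HFiber f y)).Homotopic (reparam ρ hρ h₀ h₁) :=
  ⟨{  toContinuousMap := lift (·.2.1.1) (fun q r => q.2.extend ((1 - q.1) * r + q.1 * ρ r))
        (by fun_prop) (by fun_prop)
        (fun q => q.2.extend_of_nonpos (by nlinarith [q.1.2.1, q.1.2.2]))
        (fun q => q.2.extend_of_one_le (by nlinarith [q.1.2.1, q.1.2.2]))
      map_zero_left w := by ext t <;> simp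
      map_one_left w := by ext t <;> simp [reparam] }⟩

section SelfMap

variable {A : Type} [TopologicalSpace A] {m : C(A, A)} (M : (ContinuousMap.id A).Homotopy m)
  {p : A}

def trackPath (w : HFiber m p) : ℝ → A := concat (fun r => M (projI r, w.1.1)) w.extend

lemma trackPath_compat (w : HFiber m p) : M (projI 1, w.1.1) = w.extend 0 := by
  simp [projI_of_one_le, w.extend_of_nonpos]

@[fun_prop] lemma continuous_trackPath {a : W → HFiber m p} {r : W → ℝ} (ha : Continuous a)
    (hr : Continuous r) :
    Continuous fun w => trackPath M (a w) (r w) :=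
  Continuous.concat (by fun_prop) (by fun_prop) (fun w => trackPath_compat M (a w)) hr

@[simp] lemma trackPath_zero (w : HFiber m p) : trackPath M w 0 = w.1.1 := by
  simp [trackPath, projI_of_nonpos]

@[simp] lemma trackPath_one (w : HFiber m p) : trackPath M w 1 = p := by
  simp [trackPath, w.extend_of_one_le]

/-- `(a, γ) ↦ (a, M(·, a)⁻¹ · (M(·, a) · γ))`: homotopic to the identity by shrinking the
cancelling pair, and null-homotopic by sliding `a` along `M(·, a) · γ` to `p`. -/
def unwind : C(HFiber m p, HFiber m p) :=
  lift (·.1.1) (fun w => concat (fun r => M (projI (1 - r), w.1.1)) (trackPath M w))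
    (by fun_prop)
    (Continuous.concat (by fun_prop) (by fun_prop) (fun w => by simp) continuous_snd)
    (fun w => by simp [projI_of_one_le]) (fun w => by simp)

lemma reparam_homotopic_unwind :
    (reparam (fun t => 4 * t - 3) (by fun_prop) (by norm_num) (by norm_num)).Homotopic
      (unwind M (p := p)) :=
  ⟨{  toContinuousMap := lift (·.2.1.1)
        (fun q => concat (fun r => M (projI (1 - q.1 * r), q.2.1.1))
          (concat (fun r => M (projI (1 - q.1 + q.1 * r), q.2.1.1)) q.2.extend))
        (by fun_prop)
        (.concat (by fun_prop) (by
          exact .concat (by fun_prop) (by fun_prop)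
            (fun q => by simpa using trackPath_compat M q.1.1.2) continuous_snd)
          (fun q => by simp) continuous_snd)
        (fun q => by simp [projI_of_one_le]) (fun q => by simp [q.2.extend_of_one_le])
      map_zero_left w := by
        ext t
        · rfl
        · simp only [ContinuousMap.toFun_eq_coe, lift_path, Set.Icc.coe_zero, zero_mul, sub_zero,
            add_zero, projI_one, M.apply_one]
          rw [concat_const_left, concat_const_left]
          · exact congrArg w.extend (by ring)
          · intro r hr; exact w.extend_of_nonpos hr
          · intro r hr; rw [concat_of_le_half (by linarith)]
      map_one_left w := by ext t <;> simp [unwind, trackPath] }⟩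

def contractUnwind : C(I × HFiber m p, HFiber m p) :=
  lift (fun q => trackPath M q.2 q.1)
    (fun q => concat (fun r => M (projI (1 - r), trackPath M q.2 q.1))
      (fun r => trackPath M q.2 (q.1 + r * (1 - q.1))))
    (by fun_prop) (.concat (by fun_prop) (by fun_prop) (fun q => by simp) continuous_snd)
    (fun q => by simp) (fun q => by simp)

lemma unwind_homotopic_const (e : HFiber m p) :
    (unwind M).Homotopic (ContinuousMap.const _ (contractUnwind M (1, e))) :=
  ⟨{  toContinuousMap := contractUnwind M
      map_zero_left w := by ext t <;> simp [contractUnwind, unwind]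
      map_one_left w := by ext t <;> simp [contractUnwind] }⟩

end SelfMap

section Postcomp

variable {A B C : Type} [TopologicalSpace A] [TopologicalSpace B] [TopologicalSpace C]
  {Φ : C(A, B)} {b : B}

def postcomp (Ψ : C(B, C)) : C(HFiber Φ b, HFiber (Ψ.comp Φ) (Ψ b)) :=
  lift (·.1.1) (fun w r => Ψ (w.extend r)) (by fun_prop) (by fun_prop)
    (fun w => by simp [w.extend_of_nonpos]) (fun w => by simp [w.extend_of_one_le])

variable {Ψ : C(B, A)} (L : (Φ.comp Ψ).Homotopy (ContinuousMap.id B))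

def ofPostcomp : C(HFiber (Ψ.comp Φ) (Ψ b), HFiber Φ b) :=
  lift (·.1.1)
    (fun v => concat (fun r => L (projI (1 - r), Φ v.1.1))
      (concat (fun r => Φ (v.extend r)) (fun r => L (projI r, b))))
    (by fun_prop)
    (.concat (by fun_prop) (by
      exact .concat (by fun_prop) (by fun_prop)
        (fun q => by simp [q.1.1.extend_of_one_le]) continuous_snd)
      (fun v => by simp [v.1.extend_of_nonpos]) continuous_snd)
    (fun v => by simp) (fun v => by simp)

lemma reparam_homotopic_ofPostcomp_comp_postcomp :
    (reparam (fun t => 4 * t - 2) (by fun_prop) (by norm_num) (by norm_num)).Homotopic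
      ((ofPostcomp L).comp (postcomp Ψ) : C(HFiber Φ b, HFiber Φ b)) :=
  ⟨{  toContinuousMap := lift (·.2.1.1)
        (fun q => concat (fun r => L (projI (1 - q.1 * r), Φ q.2.1.1))
          (concat (fun r => L (projI (1 - q.1), q.2.extend r))
            (fun r => L (projI (1 - q.1 + q.1 * r), b))))
        (by fun_prop)
        (.concat (by fun_prop) (by
          exact .concat (by fun_prop) (by fun_prop)
            (fun q => by simp [q.1.1.2.extend_of_one_le]) continuous_snd)
          (fun q => by simp [q.1.2.extend_of_nonpos]) continuous_snd)
        (fun q => by simp) (fun q => by simp)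
      map_zero_left w := by
        ext t
        · rfl
        · simp only [ContinuousMap.toFun_eq_coe, lift_path, Set.Icc.coe_zero, zero_mul, sub_zero,
            add_zero, projI_one, L.apply_one, ContinuousMap.id_apply]
          rw [concat_const_left, concat_const_right]
          · exact congrArg w.extend (by ring)
          · intro r hr; exact w.extend_of_one_le hr
          · intro r hr; rw [concat_of_le_half (by linarith), w.extend_of_nonpos (by linarith)]
      map_one_left w := by
        ext t
        · rfl
        · simp only [ContinuousMap.toFun_eq_coe, lift_path, lift_base, ofPostcomp, postcomp,
            ContinuousMap.comp_apply, extend_lift, extend_projI, Set.Icc.coe_one, one_mul,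
            sub_self, zero_add, projI_zero, L.apply_zero] }⟩

end Postcomp

end HFiber

theorem contractibleSpace_hFiber_of_homotopic_id {A : Type} [TopologicalSpace A] {m : C(A, A)}
    (hm : (ContinuousMap.id A).Homotopic m) (p : A) : ContractibleSpace (HFiber m p) := by
  obtain ⟨M⟩ := hm
  let e : HFiber m p := HFiber.mk p (fun r => M (projI (1 - r), p)) (by fun_prop) (by simp)
    (by simp)
  exact (contractible_iff_id_nullhomotopic _).2 ⟨_, (HFiber.homotopic_reparam _ _ _ _).trans
    ((HFiber.reparam_homotopic_unwind M).trans (HFiber.unwind_homotopic_const M e))⟩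

theorem ContinuousMap.HomotopyEquiv.contractibleSpace_hFiber {A B : Type} [TopologicalSpace A]
    [TopologicalSpace B] (e : ContinuousMap.HomotopyEquiv A B) (b : B) :
    ContractibleSpace (HFiber e.toFun b) := by
  obtain ⟨L⟩ := e.right_inv
  have := contractibleSpace_hFiber_of_homotopic_id e.left_inv.symm (e.invFun b)
  obtain ⟨c, hc⟩ := ((id_nullhomotopic _).comp_right (HFiber.ofPostcomp L (b := b))).comp_left
    (HFiber.postcomp e.invFun)
  exact (contractible_iff_id_nullhomotopic _).2
    ⟨c, (HFiber.homotopic_reparam _ _ _ _).trans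
      ((HFiber.reparam_homotopic_ofPostcomp_comp_postcomp L).trans hc)⟩

theorem ContinuousMap.HomotopyEquiv.isWeakEquiv {A B : Type} [TopologicalSpace A]
    [TopologicalSpace B] (e : ContinuousMap.HomotopyEquiv A B) : IsWeakEquiv e.toFun := fun _ b =>
  have := e.contractibleSpace_hFiber b
  isConnSpace_of_contractibleSpace _ _

namespace LoopSp

variable {Z W : Type} [TopologicalSpace Z] [TopologicalSpace W] {z : Z}

@[ext] lemma ext {δ δ' : LoopSp Z z} (h : ∀ t, δ.1 t = δ'.1 t) : δ = δ' :=
  Subtype.ext (ContinuousMap.ext h)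

def extend (δ : LoopSp Z z) (r : ℝ) : Z := δ.1 (projI r)

lemma extend_of_nonpos (δ : LoopSp Z z) {r : ℝ} (h : r ≤ 0) : δ.extend r = z := by
  rw [extend, projI_of_nonpos h, δ.2.1]

lemma extend_of_one_le (δ : LoopSp Z z) {r : ℝ} (h : 1 ≤ r) : δ.extend r = z := by
  rw [extend, projI_of_one_le h, δ.2.2]

@[simp] lemma extend_coe (δ : LoopSp Z z) (t : I) : δ.extend t = δ.1 t :=
  congrArg δ.1 (projI_coe t)

@[simp] lemma apply_projI (δ : LoopSp Z z) (r : ℝ) : δ.1 (projI r) = δ.extend r := rfl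

@[fun_prop] lemma continuous_extend {a : W → LoopSp Z z} {r : W → ℝ} (ha : Continuous a)
    (hr : Continuous r) : Continuous fun w => (a w).extend (r w) := by
  have : Continuous fun w => (a w).1 := continuous_subtype_val.comp ha
  unfold extend; fun_prop

def lift (Λ : W → ℝ → Z) (hΛ : Continuous fun p : W × ℝ => Λ p.1 p.2) (h₀ : ∀ w, Λ w 0 = z)
    (h₁ : ∀ w, Λ w 1 = z) : C(W, LoopSp Z z) where
  toFun w := ⟨⟨fun t => Λ w t, by fun_prop⟩, h₀ w, h₁ w⟩
  continuous_toFun := by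
    refine Continuous.subtype_mk (ContinuousMap.continuous_of_continuous_uncurry _ ?_) _
    exact hΛ.comp (continuous_fst.prodMk (continuous_subtype_val.comp continuous_snd))

@[simp] lemma lift_apply {Λ : W → ℝ → Z} {hΛ : Continuous fun p : W × ℝ => Λ p.1 p.2}
    {h₀ : ∀ w, Λ w 0 = z} {h₁ : ∀ w, Λ w 1 = z} (w : W) (t : I) :
    (lift Λ hΛ h₀ h₁ w).1 t = Λ w t := rfl

def reparam (ρ : ℝ → ℝ) (hρ : Continuous ρ) (h₀ : ρ 0 ≤ 0) (h₁ : 1 ≤ ρ 1) :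
    C(LoopSp Z z, LoopSp Z z) :=
  lift (fun δ r => δ.extend (ρ r)) (by fun_prop) (fun δ => δ.extend_of_nonpos h₀)
    (fun δ => δ.extend_of_one_le h₁)

lemma reparam_homotopic_id (ρ : ℝ → ℝ) (hρ : Continuous ρ) (h₀ : ρ 0 ≤ 0) (h₁ : 1 ≤ ρ 1) :
    (reparam ρ hρ h₀ h₁).Homotopic (ContinuousMap.id (LoopSp Z z)) :=
  ⟨{  toContinuousMap := lift (fun q r => q.2.extend ((1 - q.1) * ρ r + q.1 * r)) (by fun_prop)
        (fun q => q.2.extend_of_nonpos (by nlinarith [q.1.2.1, q.1.2.2]))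
        (fun q => q.2.extend_of_one_le (by nlinarith [q.1.2.1, q.1.2.2]))
      map_zero_left δ := by ext t; simp [reparam]
      map_one_left δ := by ext t; simp }⟩

def mapSymmTrans (k : C(Z, Z)) (hk : k z = z) : C(LoopSp Z z, LoopSp Z z) :=
  lift (fun δ => concat (fun r => k (δ.extend (1 - r))) δ.extend)
    (.concat (by fun_prop) (by fun_prop)
      (fun δ => by simp [δ.1.extend_of_nonpos, hk]) continuous_snd)
    (fun δ => by simp [δ.extend_of_one_le, hk]) (fun δ => by simp [δ.extend_of_one_le])

lemma mapSymmTrans_homotopic {k₀ k₁ : C(Z, Z)} (hk₀ : k₀ z = z) (hk₁ : k₁ z = z)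
    (h : k₀.HomotopicRel k₁ {z}) : (mapSymmTrans k₀ hk₀).Homotopic (mapSymmTrans k₁ hk₁) := by
  obtain ⟨K⟩ := h
  have hK : ∀ u, K (u, z) = z := fun u => (K.eq_fst u rfl).trans hk₀
  exact ⟨{
    toContinuousMap := lift (fun q => concat (fun r => K (q.1, q.2.extend (1 - r))) q.2.extend)
      (.concat (by fun_prop) (by fun_prop)
        (fun q => by simp [q.1.2.extend_of_nonpos, hK]) continuous_snd)
      (fun q => by simp [q.2.extend_of_one_le, hK]) (fun q => by simp [q.2.extend_of_one_le])
    map_zero_left δ := by ext t; simp [mapSymmTrans]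
    map_one_left δ := by ext t; simp [mapSymmTrans] }⟩

lemma mapSymmTrans_const_homotopic_id :
    (mapSymmTrans (ContinuousMap.const Z z) rfl).Homotopic (ContinuousMap.id (LoopSp Z z)) := by
  convert reparam_homotopic_id (fun t => 2 * t - 1) (by fun_prop) (by norm_num) (by norm_num)
  ext δ t
  simp [mapSymmTrans, reparam, concat_const_left fun r hr => δ.extend_of_nonpos hr]

end LoopSp

section Retraction

open HFiber

variable {X Y W : Type} [TopologicalSpace X] [TopologicalSpace Y] [TopologicalSpace W]
  {x₀ : X} {y₀ : Y} {f : C(X, Y)} {g : C(Y, X)}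

def HFiber.basePt (hg : g y₀ = x₀) : HFiber g x₀ :=
  ⟨(y₀, ContinuousMap.const I x₀), by simp [hg], rfl⟩

@[simp] lemma HFiber.basePt_base (hg : g y₀ = x₀) : (basePt hg).1.1 = y₀ := rfl

@[simp] lemma HFiber.basePt_path (hg : g y₀ = x₀) (t : I) : (basePt hg).1.2 t = x₀ := rfl

@[simp] lemma HFiber.extend_basePt (hg : g y₀ = x₀) (s : ℝ) : (basePt hg).extend s = x₀ := rfl

def HFiber.pathLift (hg : g y₀ = x₀) (η : W → ℝ → Y) (hη : Continuous fun p : W × ℝ => η p.1 p.2)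
    (h₁ : ∀ w, η w 1 = y₀) : C(W × ℝ, HFiber g x₀) :=
  lift (fun p => η p.1 p.2) (fun p s => g (η p.1 (p.2 + s * (1 - p.2))))
    (by fun_prop) (by fun_prop) (fun p => by simp) (fun p => by simp [h₁, hg])

section PathLift

variable (hg : g y₀ = x₀) {η : W → ℝ → Y} {hη : Continuous fun p : W × ℝ => η p.1 p.2}
  {h₁ : ∀ w, η w 1 = y₀}

@[simp] lemma HFiber.pathLift_base (p : W × ℝ) : (pathLift hg η hη h₁ p).1.1 = η p.1 p.2 := rfl

@[simp] lemma HFiber.pathLift_path (p : W × ℝ) (t : I) :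
    (pathLift hg η hη h₁ p).1.2 t = g (η p.1 (p.2 + t * (1 - p.2))) := rfl

end PathLift

def loopOfHFiber (hf : f x₀ = y₀) (hg : g y₀ = x₀) (hgf : ∀ x, g (f x) = x) :
    C(HFiber f y₀, LoopSp (HFiber g x₀) (basePt hg)) :=
  LoopSp.lift
    (fun w => concat
      (fun r => pathLift hg (fun w r => f (g (w.extend r))) (by fun_prop)
        (fun w => by simp [w.extend_of_one_le, hg, hf]) (w, 1 - r))
      (fun r => pathLift hg (fun w r => w.extend r) (by fun_prop)
        (fun w => w.extend_of_one_le le_rfl) (w, r)))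
    (.concat (by fun_prop) (by fun_prop)
      (fun w => by ext t <;> simp [w.1.extend_of_nonpos, hgf]) continuous_snd)
    (fun w => by ext t <;> simp [w.extend_of_one_le, hg, hf])
    (fun w => by ext t <;> simp [w.extend_of_one_le, hg])

def hFiberOfLoop (hf : f x₀ = y₀) (hg : g y₀ = x₀) :
    C(LoopSp (HFiber g x₀) (basePt hg), HFiber f y₀) :=
  lift (fun _ => x₀) (fun δ r => (δ.extend r).1.1) (by fun_prop) (by fun_prop)
    (fun δ => by simp [δ.extend_of_nonpos, hf]) (fun δ => by simp [δ.extend_of_one_le])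

lemma reparam_homotopic_hFiberOfLoop_comp_loopOfHFiber (hf : f x₀ = y₀) (hg : g y₀ = x₀)
    (hgf : ∀ x, g (f x) = x) :
    (reparam (fun t => 2 * t - 1) (by fun_prop) (by norm_num) (by norm_num)).Homotopic
      ((hFiberOfLoop hf hg).comp (loopOfHFiber hf hg hgf)) :=
  ⟨{  toContinuousMap := lift (fun q => g (q.2.extend q.1))
        (fun q => concat (fun r => f (g (q.2.extend (q.1 * (1 - r))))) q.2.extend) (by fun_prop)
        (.concat (by fun_prop) (by fun_prop)
          (fun q => by simp [q.1.2.extend_of_nonpos, hgf]) continuous_snd)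
        (fun q => by simp) (fun q => by simp [q.2.extend_of_one_le])
      map_zero_left w := by
        ext t
        · simp [reparam, w.2.1, hgf]
        · simp only [ContinuousMap.toFun_eq_coe, lift_path, Set.Icc.coe_zero, zero_mul,
            w.extend_of_nonpos le_rfl, hgf]
          exact concat_const_left (fun r hr => w.extend_of_nonpos hr) t
      map_one_left w := by
        ext t
        · simp [hFiberOfLoop, w.2.2, hg]
        · simp [hFiberOfLoop, loopOfHFiber, comp_concat (fun v : HFiber g x₀ => v.1.1)] }⟩

def HFiber.retractMap (hgf : ∀ x, g (f x) = x) : C(HFiber g x₀, HFiber g x₀) :=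
  lift (fun v => f (g v.1.1)) (fun v => v.extend) (by fun_prop) (by fun_prop)
    (fun v => by simp [v.extend_of_nonpos, hgf]) (fun v => v.extend_of_one_le le_rfl)

lemma HFiber.retractMap_basePt (hf : f x₀ = y₀) (hg : g y₀ = x₀) (hgf : ∀ x, g (f x) = x) :
    retractMap hgf (basePt hg) = basePt hg := by
  ext t <;> simp [retractMap, hg, hf]

lemma HFiber.retractMap_homotopicRel_const (hf : f x₀ = y₀) (hg : g y₀ = x₀)
    (hgf : ∀ x, g (f x) = x) :
    (retractMap hgf).HomotopicRel (ContinuousMap.const _ (basePt hg)) {basePt hg} :=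
  ⟨{  toContinuousMap := lift (fun q => f (q.2.extend q.1))
        (fun q s => q.2.extend (q.1 + s * (1 - q.1))) (by fun_prop) (by fun_prop)
        (fun q => by simp [hgf]) (fun q => by simp [q.2.extend_of_one_le])
      map_zero_left v := by ext t <;> simp [retractMap, v.2.1]
      map_one_left v := by ext t <;> simp [v.extend_of_one_le, v.2.2, hf]
      prop' u v hv := by
        rw [Set.mem_singleton_iff.1 hv]
        ext t <;> simp [retractMap, hf, hg] }⟩

/-- At time `u`, the `X`-path over `δ r` runs through the square of `δ` from `(r, 0)` along a
segment whose far end moves along the part of the boundary sent to `x₀`: from the right edge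
(`u = 0`, where the square is only read on its bottom edge `g ∘ ω`) to the top edge (`u = 1`,
where the path is the vertical one of `δ` itself). -/
def HFiber.rotatedSquare (hg : g y₀ = x₀) (η : LoopSp (HFiber g x₀) (basePt hg) → ℝ → Y)
    (hη : Continuous fun p : LoopSp (HFiber g x₀) (basePt hg) × ℝ => η p.1 p.2)
    (hgη : ∀ δ r, g (η δ r) = g (δ.extend r).1.1) :
    C((I × LoopSp (HFiber g x₀) (basePt hg)) × ℝ, HFiber g x₀) :=
  lift (fun p => η p.1.2 p.2)
    (fun p s => (p.1.2.extend (p.2 + s * (1 - p.2) * min 1 (2 - 2 * (p.1.1 : ℝ)))).extend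
      (s * min 1 (2 * (p.1.1 : ℝ))))
    (by fun_prop) (by fun_prop) (fun p => by simp [extend_of_nonpos, hgη])
    (fun p => by
      rcases le_total (p.1.1 : ℝ) (1 / 2) with h | h
      · rw [min_eq_left (by linarith : (1 : ℝ) ≤ 2 - 2 * p.1.1)]
        simp [p.1.2.extend_of_one_le]
      · rw [min_eq_left (by linarith : (1 : ℝ) ≤ 2 * p.1.1)]
        simp [extend_of_one_le])

lemma loopOfHFiber_comp_hFiberOfLoop_homotopic (hf : f x₀ = y₀) (hg : g y₀ = x₀)
    (hgf : ∀ x, g (f x) = x) :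
    ((loopOfHFiber hf hg hgf).comp (hFiberOfLoop hf hg)).Homotopic
      (LoopSp.mapSymmTrans (retractMap hgf) (retractMap_basePt hf hg hgf)) :=
  ⟨{  toContinuousMap := LoopSp.lift
        (fun q => concat
          (fun r => rotatedSquare hg (fun δ r => f (g (δ.extend r).1.1)) (by fun_prop)
            (fun δ r => hgf _) (q, 1 - r))
          (fun r => rotatedSquare hg (fun δ r => (δ.extend r).1.1) (by fun_prop)
            (fun δ r => rfl) (q, r)))
        (.concat (by fun_prop) (by fun_prop) (fun q => by
          ext t <;> simp [rotatedSquare, q.1.2.extend_of_nonpos, hf, hg]) continuous_snd)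
        (fun q => by ext t <;> simp [rotatedSquare, q.2.extend_of_one_le, hf, hg])
        (fun q => by ext t <;> simp [rotatedSquare, q.2.extend_of_one_le])
      map_zero_left δ := by
        refine LoopSp.ext fun t => ?_
        simp only [ContinuousMap.toFun_eq_coe, LoopSp.lift_apply, ContinuousMap.comp_apply,
          loopOfHFiber]
        congr 1 <;> funext r <;> ext s <;>
          simp [rotatedSquare, hFiberOfLoop, extend_of_nonpos, hgf]
      map_one_left δ := by
        refine LoopSp.ext fun t => ?_
        simp only [ContinuousMap.toFun_eq_coe, LoopSp.lift_apply, LoopSp.mapSymmTrans]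
        congr 1 <;> funext r <;> ext s <;> simp [rotatedSquare, retractMap] }⟩

def hFiberHomotopyEquivLoop (hf : f x₀ = y₀) (hg : g y₀ = x₀) (hgf : ∀ x, g (f x) = x) :
    ContinuousMap.HomotopyEquiv (HFiber f y₀) (LoopSp (HFiber g x₀) (basePt hg)) where
  toFun := loopOfHFiber hf hg hgf
  invFun := hFiberOfLoop hf hg
  left_inv := ((homotopic_reparam _ _ _ _).trans
    (reparam_homotopic_hFiberOfLoop_comp_loopOfHFiber hf hg hgf)).symm
  right_inv := (loopOfHFiber_comp_hFiberOfLoop_homotopic hf hg hgf).trans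
    ((LoopSp.mapSymmTrans_homotopic _ rfl (retractMap_homotopicRel_const hf hg hgf)).trans
      LoopSp.mapSymmTrans_const_homotopic_id)

end Retraction

theorem stmt0 {X Y : Type} [TopologicalSpace X] [TopologicalSpace Y] (x₀ : X) (y₀ : Y)
    (f : C(X, Y)) (g : C(Y, X)) (hf : f x₀ = y₀) (hg : g y₀ = x₀)
    (hgf : ∀ x, g (f x) = x) :
    WeakHomotopyEquivalent (HFiber f y₀)
      (LoopSp (HFiber g x₀) (@id (HFiber g x₀) ⟨(y₀, ContinuousMap.const I x₀), by simp [hg], rfl⟩)) :=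
  Or.inl ⟨_, (hFiberHomotopyEquivLoop hf hg hgf).isWeakEquiv⟩
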